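/- For every integer k ≥ 2, let H be the join of the complete graph K_{2k−2} and the cycle C_5 (the graph obtained by adding all edges between a copy of K_{2k−2} and a copy of C_5). Then the clique number of H is 2k, the set of even cycle lengths of H is exactly {4, 6, …, 2k+2} (so |L_e(H)| = k and the longest even cycle has length 2k+2 = 2|L_e(H)|+2), and the chromatic number of H is 2k+1 = 2|L_e(H)|+1. -/

import Mathlib

open SimpleGraph

/-- `G` contains a cycle of length `n`. -/
def SimpleGraph.HasCycleLength {V : Type*} (G : SimpleGraph V) (n : ℕ) : Prop :=
  ∃ (v : V) (c : G.Walk v v), c.IsCycle ∧ c.length = n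

/-- `L_o(G)`: the set of odd cycle lengths of `G`. -/
def SimpleGraph.oddCycleLengths {V : Type*} (G : SimpleGraph V) : Set ℕ :=
  {n | Odd n ∧ G.HasCycleLength n}

/-- `L_e(G)`: the set of even cycle lengths of `G`. -/
def SimpleGraph.evenCycleLengths {V : Type*} (G : SimpleGraph V) : Set ℕ :=
  {n | Even n ∧ G.HasCycleLength n}

/-- `G` is 2-connected: at least 3 vertices, and deleting any single vertex
leaves a connected graph. -/
def SimpleGraph.TwoConnected {V : Type*} [Fintype V] (G : SimpleGraph V) : Prop :=
  3 ≤ Fintype.card V ∧ ∀ v : V, (G.induce {v}ᶜ).Connected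

/-- The join of two graphs: disjoint union together with all edges between the two parts. -/
def SimpleGraph.joinGraph {α β : Type*} (G₁ : SimpleGraph α) (G₂ : SimpleGraph β) :
    SimpleGraph (α ⊕ β) where
  Adj x y :=
    match x, y with
    | Sum.inl a, Sum.inl b => G₁.Adj a b
    | Sum.inr a, Sum.inr b => G₂.Adj a b
    | Sum.inl _, Sum.inr _ => True
    | Sum.inr _, Sum.inl _ => True
  symm := by
    constructor
    rintro (a | a) (b | b) h
    · exact G₁.adj_symm h
    · trivial
    · trivial
    · exact G₂.adj_symm h
  loopless := by
    constructor
    rintro (a | a) h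
    · exact G₁.irrefl h
    · exact G₂.irrefl h

/-! Joining is additive for the clique number and for the chromatic number: a clique of
`G₁ + G₂` is a clique of `G₁` plus a clique of `G₂`, and a proper colouring of `G₁ + G₂` uses
disjoint colour sets on the two sides. With `ω(K_m) = χ(K_m) = m`, `ω(C₅) = 2` and `χ(C₅) = 3`
this gives `ω(H) = 2k` and `χ(H) = 2k + 1`.

A path on `a` vertices in `G₁` and one on `b` vertices in `G₂` close up, through two cross
edges, to a cycle of length `a + b`. Since `K_{2k-2}` and `C₅` have Hamiltonian paths, `H` has a
cycle of every length from `3` up to its order `2k + 3`, so its even cycle lengths are exactly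
`4, 6, …, 2k + 2`. -/

namespace SimpleGraph

section Join

variable {α β α' β' : Type*} {G₁ : SimpleGraph α} {G₂ : SimpleGraph β}

@[simp] lemma joinGraph_adj_inl_inl {a b : α} :
    (G₁.joinGraph G₂).Adj (.inl a) (.inl b) ↔ G₁.Adj a b := Iff.rfl

@[simp] lemma joinGraph_adj_inr_inr {a b : β} :
    (G₁.joinGraph G₂).Adj (.inr a) (.inr b) ↔ G₂.Adj a b := Iff.rfl

@[simp] lemma joinGraph_adj_inl_inr (a : α) (b : β) : (G₁.joinGraph G₂).Adj (.inl a) (.inr b) :=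
  trivial

@[simp] lemma joinGraph_adj_inr_inl (a : α) (b : β) : (G₁.joinGraph G₂).Adj (.inr b) (.inl a) :=
  trivial

def joinGraphInl : G₁ →g G₁.joinGraph G₂ := ⟨Sum.inl, id⟩

def joinGraphInr : G₂ →g G₁.joinGraph G₂ := ⟨Sum.inr, id⟩

lemma IsContained.joinGraph {H₁ : SimpleGraph α'} {H₂ : SimpleGraph β'}
    (h₁ : G₁ ⊑ H₁) (h₂ : G₂ ⊑ H₂) : G₁.joinGraph G₂ ⊑ H₁.joinGraph H₂ := by
  obtain ⟨f₁⟩ := h₁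
  obtain ⟨f₂⟩ := h₂
  refine ⟨⟨⟨Sum.map f₁ f₂, ?_⟩, Sum.map_injective.mpr ⟨f₁.injective, f₂.injective⟩⟩⟩
  rintro (a | a) (b | b) h
  · exact f₁.toHom.map_adj h
  · trivial
  · trivial
  · exact f₂.toHom.map_adj h

lemma isClique_disjSum {s : Finset α} {t : Finset β} :
    (G₁.joinGraph G₂).IsClique (s.disjSum t : Set (α ⊕ β)) ↔ G₁.IsClique s ∧ G₂.IsClique t := by
  constructor
  · intro h
    refine ⟨fun a ha b hb hab => ?_, fun a ha b hb hab => ?_⟩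
    · exact h (Finset.inl_mem_disjSum.mpr ha) (Finset.inl_mem_disjSum.mpr hb)
        (Sum.inl_injective.ne hab)
    · exact h (Finset.inr_mem_disjSum.mpr ha) (Finset.inr_mem_disjSum.mpr hb)
        (Sum.inr_injective.ne hab)
  · rintro ⟨h₁, h₂⟩ (a | a) ha (b | b) hb hab
    · exact h₁ (by simpa using ha) (by simpa using hb) (by simpa using hab)
    · trivial
    · trivial
    · exact h₂ (by simpa using ha) (by simpa using hb) (by simpa using hab)

lemma cliqueNum_joinGraph [Finite α] [Finite β] :
    (G₁.joinGraph G₂).cliqueNum = G₁.cliqueNum + G₂.cliqueNum := by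
  apply le_antisymm
  · obtain ⟨s, hs⟩ := (G₁.joinGraph G₂).exists_isNClique_cliqueNum
    rw [← hs.card_eq, ← Finset.card_toLeft_add_card_toRight]
    have h := hs.isClique
    rw [← Finset.toLeft_disjSum_toRight (u := s), isClique_disjSum] at h
    exact add_le_add h.1.card_le_cliqueNum h.2.card_le_cliqueNum
  · obtain ⟨s₁, hs₁⟩ := G₁.exists_isNClique_cliqueNum
    obtain ⟨s₂, hs₂⟩ := G₂.exists_isNClique_cliqueNum
    have h : (G₁.joinGraph G₂).IsClique (s₁.disjSum s₂ : Set (α ⊕ β)) :=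
      isClique_disjSum.mpr ⟨hs₁.isClique, hs₂.isClique⟩
    rw [← hs₁.card_eq, ← hs₂.card_eq, ← Finset.card_disjSum]
    exact h.card_le_cliqueNum

def Coloring.joinGraph {γ₁ γ₂ : Type*} (C₁ : G₁.Coloring γ₁) (C₂ : G₂.Coloring γ₂) :
    (G₁.joinGraph G₂).Coloring (γ₁ ⊕ γ₂) :=
  Coloring.mk (Sum.map C₁ C₂) <| by
    rintro (a | a) (b | b) h
    · simpa using C₁.valid h
    · simp
    · simp
    · simpa using C₂.valid h

lemma Colorable.joinGraph {m n : ℕ} (h₁ : G₁.Colorable m) (h₂ : G₂.Colorable n) :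
    (G₁.joinGraph G₂).Colorable (m + n) := by
  obtain ⟨C₁⟩ := h₁
  obtain ⟨C₂⟩ := h₂
  simpa using (C₁.joinGraph C₂).colorable

lemma Coloring.colorable_ncard_range {V γ : Type*} {G : SimpleGraph V} [Finite γ]
    (C : G.Coloring γ) : G.Colorable (Set.range C).ncard := by
  have : Fintype (Set.range C) := Fintype.ofFinite _
  let C' : G.Coloring (Set.range C) := Coloring.mk (fun v => ⟨C v, v, rfl⟩) fun h hC =>
    C.valid h (congrArg Subtype.val hC)
  simpa only [Fintype.card_eq_nat_card, Nat.card_coe_set_eq] using C'.colorable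

lemma Colorable.exists_add_le_of_joinGraph {n : ℕ} (h : (G₁.joinGraph G₂).Colorable n) :
    ∃ n₁ n₂, n₁ + n₂ ≤ n ∧ G₁.Colorable n₁ ∧ G₂.Colorable n₂ := by
  obtain ⟨C⟩ := h
  let C₁ : G₁.Coloring (Fin n) := C.comp joinGraphInl
  let C₂ : G₂.Coloring (Fin n) := C.comp joinGraphInr
  have hdisj : Disjoint (Set.range C₁) (Set.range C₂) := by
    rw [Set.disjoint_left]
    rintro _ ⟨a, rfl⟩ ⟨b, hb⟩
    exact C.valid (joinGraph_adj_inl_inr a b) hb.symm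
  refine ⟨_, _, ?_, C₁.colorable_ncard_range, C₂.colorable_ncard_range⟩
  calc (Set.range C₁).ncard + (Set.range C₂).ncard = (Set.range C₁ ∪ Set.range C₂).ncard :=
        (Set.ncard_union_eq hdisj).symm
    _ ≤ Nat.card (Fin n) := Set.ncard_le_card _
    _ = n := Nat.card_eq_fintype_card.trans (Fintype.card_fin n)

lemma chromaticNumber_joinGraph :
    (G₁.joinGraph G₂).chromaticNumber = G₁.chromaticNumber + G₂.chromaticNumber := by
  apply le_antisymm
  · by_cases h₁ : G₁.chromaticNumber = ⊤
    · simp [h₁]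
    by_cases h₂ : G₂.chromaticNumber = ⊤
    · simp [h₂]
    calc (G₁.joinGraph G₂).chromaticNumber
        ≤ ((G₁.chromaticNumber.toNat + G₂.chromaticNumber.toNat : ℕ) : ℕ∞) :=
          ((colorable_of_chromaticNumber_ne_top h₁).joinGraph
            (colorable_of_chromaticNumber_ne_top h₂)).chromaticNumber_le
      _ = G₁.chromaticNumber + G₂.chromaticNumber := by
          rw [Nat.cast_add, ENat.natCast_toNat h₁, ENat.natCast_toNat h₂]
  · refine le_iInf₂ fun n (hn : (G₁.joinGraph G₂).Colorable n) => ?_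
    obtain ⟨n₁, n₂, hle, h₁, h₂⟩ := hn.exists_add_le_of_joinGraph
    calc G₁.chromaticNumber + G₂.chromaticNumber ≤ n₁ + n₂ :=
          add_le_add h₁.chromaticNumber_le h₂.chromaticNumber_le
      _ ≤ n := mod_cast hle

end Join

section Cycles

variable {V α β : Type*} {G : SimpleGraph V} {G₁ : SimpleGraph α} {G₂ : SimpleGraph β} {n : ℕ}

lemma HasCycleLength.three_le (h : G.HasCycleLength n) : 3 ≤ n := by
  obtain ⟨_, c, hc, rfl⟩ := h
  exact hc.three_le_length

lemma HasCycleLength.le_card [Fintype V] (h : G.HasCycleLength n) : n ≤ Fintype.card V := by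
  obtain ⟨f⟩ := (cycleGraph_isContained_iff h.three_le).mpr h
  simpa using Fintype.card_le_of_injective f f.injective

lemma val_consecutive_of_cycleGraph_adj {u v : Fin n} (h : (cycleGraph n).Adj u v) :
    u.val + 1 = v.val ∨ v.val + 1 = u.val ∨ (u.val = 0 ∧ v.val + 1 = n) ∨
      (v.val = 0 ∧ u.val + 1 = n) := by
  have hsub (x y : Fin n) (hxy : (x - y).val = 1) :
      x.val = y.val + 1 ∨ (x.val = 0 ∧ y.val + 1 = n) := by
    rcases le_or_gt y x with hle | hlt
    · rw [Fin.sub_val_of_le hle] at hxy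
      omega
    · rw [Fin.coe_sub_iff_lt.mpr hlt] at hxy
      omega
  rcases cycleGraph_adj'.mp h with h | h
  · have := hsub u v h
    omega
  · have := hsub v u h
    omega

lemma pathGraph_isContained_pathGraph {m : ℕ} (h : m ≤ n) : pathGraph m ⊑ pathGraph n :=
  ⟨⟨⟨Fin.castLE h, by simp [pathGraph_adj]⟩, Fin.castLE_injective h⟩⟩

lemma cycleGraph_add_isContained_joinGraph {a b : ℕ} (ha : 1 ≤ a) (hb : 1 ≤ b) :
    cycleGraph (a + b) ⊑ (pathGraph a).joinGraph (pathGraph b) := by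
  refine ⟨⟨⟨finSumFinEquiv.symm, fun {i j} h => ?_⟩, finSumFinEquiv.symm.injective⟩⟩
  obtain ⟨x, rfl⟩ := finSumFinEquiv.surjective i
  obtain ⟨y, rfl⟩ := finSumFinEquiv.surjective j
  have := val_consecutive_of_cycleGraph_adj h
  rcases x with x | x <;> rcases y with y | y <;>
    simp [pathGraph_adj] at this ⊢ <;> omega

lemma hasCycleLength_joinGraph {p q : ℕ} (h₁ : pathGraph p ⊑ G₁) (h₂ : pathGraph q ⊑ G₂)
    (hp : 1 ≤ p) (hq : 1 ≤ q) (hn : 3 ≤ n) (hnpq : n ≤ p + q) :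
    (G₁.joinGraph G₂).HasCycleLength n := by
  obtain ⟨a, b, rfl, ha, hb, hap, hbq⟩ : ∃ a b, a + b = n ∧ 1 ≤ a ∧ 1 ≤ b ∧ a ≤ p ∧ b ≤ q :=
    ⟨n - min q (n - 1), min q (n - 1), by omega, by omega, by omega, by omega, by omega⟩
  refine (cycleGraph_isContained_iff hn).mp ?_
  exact (cycleGraph_add_isContained_joinGraph ha hb).trans <|
    ((pathGraph_isContained_pathGraph hap).trans h₁).joinGraph
      ((pathGraph_isContained_pathGraph hbq).trans h₂)

end Cycles

lemma cliqueNum_top {V : Type*} [Fintype V] : (⊤ : SimpleGraph V).cliqueNum = Fintype.card V := by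
  apply le_antisymm
  · obtain ⟨s, hs⟩ := (⊤ : SimpleGraph V).exists_isNClique_cliqueNum
    exact hs.card_eq ▸ s.card_le_univ
  · have h : (⊤ : SimpleGraph V).IsClique (Finset.univ : Finset V) := by simp
    exact h.card_le_cliqueNum

lemma cycleGraph_five_cliqueFree_three : (cycleGraph 5).CliqueFree 3 := by
  intro s hs
  obtain ⟨a, b, c, hab, hac, hbc, -⟩ := is3Clique_iff.mp hs
  revert a b c
  decide

lemma cliqueNum_cycleGraph_five : (cycleGraph 5).cliqueNum = 2 := by
  apply le_antisymm
  · obtain ⟨s, hs⟩ := (cycleGraph 5).exists_isNClique_cliqueNum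
    by_contra! h
    exact cycleGraph_five_cliqueFree_three.mono h s hs
  · have h : (cycleGraph 5).IsClique ({0, 1} : Finset (Fin 5)) := by
      rw [Finset.coe_pair]
      exact isClique_pair.mpr fun _ => by decide
    exact h.card_le_cliqueNum

end SimpleGraph

lemma Nat.ncard_even_four_le_le (k : ℕ) : {n | Even n ∧ 4 ≤ n ∧ n ≤ 2 * k + 2}.ncard = k := by
  have : {n | Even n ∧ 4 ≤ n ∧ n ≤ 2 * k + 2} = (fun i => 2 * i) '' Set.Icc 2 (k + 1) := by
    ext n
    simp only [Set.mem_ofPred_eq, Set.mem_image, Set.mem_Icc]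
    constructor
    · rintro ⟨⟨r, rfl⟩, h4, hle⟩
      exact ⟨r, ⟨by omega, by omega⟩, by omega⟩
    · rintro ⟨i, ⟨h2, hle⟩, rfl⟩
      exact ⟨⟨i, by omega⟩, by omega, by omega⟩
  rw [this, Set.ncard_image_of_injective _ (fun a b h => by simpa using h),
    Set.ncard_eq_toFinset_card']
  simp

/-- For `k ≥ 2`, the join `H` of `K_{2k-2}` and `C_5` satisfies
`w(H) = 2k`, `L_e(H) = {4, 6, …, 2k+2}` (so `|L_e(H)| = k`), and `χ(H) = 2k+1`. -/
theorem join_complete_cycle5_even (k : ℕ) (hk : 2 ≤ k) :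
    let H := (⊤ : SimpleGraph (Fin (2 * k - 2))).joinGraph (SimpleGraph.cycleGraph 5)
    H.cliqueNum = 2 * k ∧
      H.evenCycleLengths = {n | Even n ∧ 4 ≤ n ∧ n ≤ 2 * k + 2} ∧
      (H.evenCycleLengths).ncard = k ∧
      H.chromaticNumber = ((2 * k + 1 : ℕ) : ℕ∞) := by
  intro H
  have hL : H.evenCycleLengths = {n | Even n ∧ 4 ≤ n ∧ n ≤ 2 * k + 2} := by
    ext n
    refine ⟨fun ⟨he, hn⟩ => ?_, fun ⟨he, h4, hle⟩ => ⟨he, ?_⟩⟩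
    · have h3 := hn.three_le
      have hcard := hn.le_card
      simp only [Fintype.card_sum, Fintype.card_fin] at hcard
      obtain ⟨r, rfl⟩ := he
      exact ⟨⟨r, rfl⟩, by omega, by omega⟩
    · exact hasCycleLength_joinGraph (.of_le le_top) (.of_le pathGraph_le_cycleGraph)
        (by omega) (by omega) (by omega) (by omega)
  refine ⟨?_, hL, hL ▸ Nat.ncard_even_four_le_le k, ?_⟩
  · rw [cliqueNum_joinGraph, cliqueNum_top, cliqueNum_cycleGraph_five, Fintype.card_fin]
    omega
  · rw [chromaticNumber_joinGraph, chromaticNumber_top,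
      chromaticNumber_cycleGraph_of_odd 5 (by norm_num) (by decide), Fintype.card_fin]
    norm_cast
    omega
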